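/- The fermionic super-Virasoro constraints imply the bosonic ones: if an element 𝒵 ∈ A satisfies G_{n+1/2} 𝒵 = 0 for every integer n ≥ −1, then L_n 𝒵 = 0 for every integer n ≥ −1. -/

import Mathlib

/-!
We work on the free supercommutative ℝ-algebra
`A = ℝ[g₀,g₁,…] ⊗ Λ(ξ_{1/2}, ξ_{3/2}, …)`, realized in Lean as
`MvPolynomial ℕ ℝ ⊗[ℝ] ExteriorAlgebra ℝ (ℕ →₀ ℝ)`; the even generator `g_k` is
`X k ⊗ 1` and the odd generator `ξ_{k+1/2}` is `1 ⊗ ι (single k 1)`.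

* `dg i` is the even derivation `∂/∂g_i` (the formal partial derivative on the
  polynomial factor), and `dxi i` is the odd derivation `∂/∂ξ_{i+1/2}`
  (contraction with the `i`-th dual-basis functional on the exterior factor).
* `gmul k` and `ximul k` are left multiplication by `g_k` and by `ξ_{k+1/2}`.
* The super-Virasoro operators of the supereigenvalue model
  (eqs. (3.10)-(3.11) of the paper, with `v = (t_s/2N)²`) are indexed by the
  integers `n ≥ -1`; we reindex them by `m : ℕ` via `n = m - 1` (a bijection from
  `ℕ` onto `{n : ℤ | n ≥ -1}`): `Lop T₂ v m` is `L_{m-1}` and `Gop T₂ v m` is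
  `G_{(m-1)+1/2} = G_{m-1/2}`.  Concretely (with `n = m-1`):

  `L_n = T₂ ∂/∂g_{n+2} + Σ_{k≥1} k g_k ∂/∂g_{k+n} + (v/2) Σ_{j=0}^{n} ∂²/(∂g_j∂g_{n-j})`
  `      + Σ_{k≥0, k+n≥0} (k+(n+1)/2) ξ_{k+1/2} ∂/∂ξ_{n+k+1/2}`
  `      + (v/2) Σ_{j=0}^{n-1} ((n-1)/2 - j) ∂²/(∂ξ_{j+1/2}∂ξ_{n-j-1/2})`,

  `G_{n+1/2} = T₂ ∂/∂ξ_{n+5/2} + Σ_{k≥1} k g_k ∂/∂ξ_{n+k+1/2}`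
  `      + Σ_{k≥0} ξ_{k+1/2} ∂/∂g_{k+n+1} + v Σ_{j=0}^{n} (∂/∂ξ_{j+1/2})(∂/∂g_{n-j})`.

  The infinite sums over `k` are taken pointwise via `finsum` (on each element of
  `A` only finitely many summands act nontrivially); a `k = 0` summand whose
  stated range is `k ≥ 1` carries the coefficient `0`, so including it is
  harmless.  Sums `Σ_{j=0}^{n}` and `Σ_{j=0}^{n-1}` are `Finset.range m` and
  `Finset.range (m-1)` respectively (empty when the upper limit is negative).
-/

open scoped TensorProduct

set_option synthInstance.maxHeartbeats 1000000
set_option maxHeartbeats 1000000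

/-- The free supercommutative algebra `ℝ[g₀,g₁,…] ⊗ Λ(ξ_{1/2},ξ_{3/2},…)`. -/
abbrev SEA : Type := MvPolynomial ℕ ℝ ⊗[ℝ] ExteriorAlgebra ℝ (ℕ →₀ ℝ)

/-- The even derivation `∂/∂g_i`. -/
noncomputable def dg (i : ℕ) : SEA →ₗ[ℝ] SEA :=
  TensorProduct.map (MvPolynomial.pderiv i).toLinearMap LinearMap.id

/-- The odd derivation `∂/∂ξ_{i+1/2}`: contraction with the `i`-th dual-basis
functional on the exterior factor. -/
noncomputable def dxi (i : ℕ) : SEA →ₗ[ℝ] SEA :=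
  TensorProduct.map LinearMap.id
    (CliffordAlgebra.contractLeft (Q := (0 : QuadraticForm ℝ (ℕ →₀ ℝ))) (Finsupp.lapply i))

/-- Left multiplication by `g_k`. -/
noncomputable def gmul (k : ℕ) : SEA →ₗ[ℝ] SEA :=
  LinearMap.mulLeft ℝ ((MvPolynomial.X k : MvPolynomial ℕ ℝ) ⊗ₜ[ℝ] (1 : ExteriorAlgebra ℝ (ℕ →₀ ℝ)))

/-- Left multiplication by `ξ_{k+1/2}`. -/
noncomputable def ximul (k : ℕ) : SEA →ₗ[ℝ] SEA :=
  LinearMap.mulLeft ℝ ((1 : MvPolynomial ℕ ℝ) ⊗ₜ[ℝ] ExteriorAlgebra.ι ℝ (Finsupp.single k 1))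

/-- The bosonic super-Virasoro operator `L_{m-1}` (eq. (3.10)). -/
noncomputable def Lop (T₂ v : ℝ) (m : ℕ) : SEA → SEA := fun a =>
  T₂ • dg (m + 1) a
  + (∑ᶠ k : ℕ, (k : ℝ) • gmul k (dg (m + k - 1) a))
  + (v / 2) • ∑ j ∈ Finset.range m, dg j (dg (m - 1 - j) a)
  + (∑ᶠ k : ℕ, if m + k = 0 then 0 else ((k : ℝ) + (m : ℝ) / 2) • ximul k (dxi (m + k - 1) a))
  + (v / 2) • ∑ j ∈ Finset.range (m - 1),
      (((m : ℝ) - 2) / 2 - (j : ℝ)) • dxi j (dxi (m - j - 2) a)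

/-- The fermionic super-Virasoro operator `G_{(m-1)+1/2}` (eq. (3.11)). -/
noncomputable def Gop (T₂ v : ℝ) (m : ℕ) : SEA → SEA := fun a =>
  T₂ • dxi (m + 1) a
  + (∑ᶠ k : ℕ, (k : ℝ) • gmul k (dxi (m + k - 1) a))
  + (∑ᶠ k : ℕ, ximul k (dg (k + m) a))
  + v • ∑ j ∈ Finset.range m, dxi j (dg (m - 1 - j) a)

/-!
`G_{-1/2}` and `G_{m-1/2}` anticommute to `2 L_{m-1}`, so a common zero of all fermionic
operators is annihilated by every `L_{m-1}`.

Every element of `A` involves only finitely many generators, so on a given element the infinite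
sums may be truncated at an index `N` beyond all of them. The truncated operators are finite
combinations of `∂/∂ξ_i`, `g_k ∂/∂ξ_i`, `ξ_k ∂/∂g_i` and `∂/∂ξ_j ∂/∂g_i`, whose pairwise
anticommutators follow from the canonical relations `[∂/∂g_i, g_k] = δ_{ik}` and
`{∂/∂ξ_i, ξ_k} = δ_{ik}`. Truncation leaves boundary terms, which vanish on the element.
-/

section Anticommutator

variable {R A : Type*} [CommSemiring R] [Semiring A] [Algebra R A]

variable (R A) in
def anticommutator : A →ₗ[R] A →ₗ[R] A :=
  LinearMap.mul R A + (LinearMap.mul R A).flip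

theorem anticommutator_apply (x y : A) : anticommutator R A x y = x * y + y * x := rfl

theorem anticommutator_comm (x y : A) : anticommutator R A x y = anticommutator R A y x :=
  add_comm _ _

end Anticommutator

theorem MvPolynomial.pderiv_pderiv_comm {σ R : Type*} [CommSemiring R] (i j : σ)
    (p : MvPolynomial σ R) : pderiv i (pderiv j p) = pderiv j (pderiv i p) := by
  classical
  induction p using MvPolynomial.induction_on with
  | C a => simp
  | add p q hp hq => simp [hp, hq]
  | mul_X p n hp =>
    simp only [pderiv_mul, map_add, hp, pderiv_X, Pi.single_apply, apply_ite (pderiv _),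
      pderiv_one, map_zero]
    split_ifs <;> ring

theorem ExteriorAlgebra.eventually_contractLeft_lapply_eq_zero {R ι : Type*} [CommRing R]
    (x : ExteriorAlgebra R (ι →₀ R)) :
    ∀ᶠ i in Filter.cofinite,
      CliffordAlgebra.contractLeft (Q := 0) (Finsupp.lapply i) x = 0 := by
  induction x using CliffordAlgebra.left_induction with
  | algebraMap r => simp [CliffordAlgebra.contractLeft_algebraMap]
  | add x y hx hy => filter_upwards [hx, hy] with i hx hy; simp [hx, hy]
  | ι_mul x v hx =>
    filter_upwards [hx, v.support.eventually_cofinite_notMem] with i hx hv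
    simp [CliffordAlgebra.contractLeft_ι_mul, hx, Finsupp.notMem_support_iff.mp hv]

namespace SuperVirasoro

open MvPolynomial TensorProduct Finset Filter

lemma dg_tmul (i : ℕ) (p : MvPolynomial ℕ ℝ) (x : ExteriorAlgebra ℝ (ℕ →₀ ℝ)) :
    dg i (p ⊗ₜ x) = pderiv i p ⊗ₜ x := rfl

lemma dxi_tmul (i : ℕ) (p : MvPolynomial ℕ ℝ) (x : ExteriorAlgebra ℝ (ℕ →₀ ℝ)) :
    dxi i (p ⊗ₜ x) = p ⊗ₜ CliffordAlgebra.contractLeft (Q := 0) (Finsupp.lapply i) x := rfl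

lemma gmul_tmul (k : ℕ) (p : MvPolynomial ℕ ℝ) (x : ExteriorAlgebra ℝ (ℕ →₀ ℝ)) :
    gmul k (p ⊗ₜ x) = (X k * p) ⊗ₜ x := by
  simp [gmul, Algebra.TensorProduct.tmul_mul_tmul]

lemma ximul_tmul (k : ℕ) (p : MvPolynomial ℕ ℝ) (x : ExteriorAlgebra ℝ (ℕ →₀ ℝ)) :
    ximul k (p ⊗ₜ x) = p ⊗ₜ (ExteriorAlgebra.ι ℝ (Finsupp.single k 1) * x) := by
  simp [ximul, Algebra.TensorProduct.tmul_mul_tmul]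

lemma eventually_dg_eq_zero_and_dxi_eq_zero (a : SEA) :
    ∀ᶠ i in atTop, dg i a = 0 ∧ dxi i a = 0 := by
  rw [← Nat.cofinite_eq_atTop]
  induction a using TensorProduct.induction_on with
  | zero => simp
  | tmul p x =>
    filter_upwards [p.vars.eventually_cofinite_notMem,
      ExteriorAlgebra.eventually_contractLeft_lapply_eq_zero x] with i hp hx
    simp [dg_tmul, dxi_tmul, pderiv_eq_zero_of_notMem_vars hp, hx]
  | add a b ha hb =>
    filter_upwards [ha, hb] with i ha hb
    simp [ha, hb]

section Relations

variable (i j k l : ℕ) (a : SEA)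

lemma dg_dg_comm : dg i (dg j a) = dg j (dg i a) := by
  induction a using TensorProduct.induction_on with
  | zero => simp
  | tmul p x => simp [dg_tmul, pderiv_pderiv_comm]
  | add a b ha hb => simp [ha, hb]

lemma dg_dxi_comm : dg i (dxi j a) = dxi j (dg i a) := by
  induction a using TensorProduct.induction_on with
  | zero => simp
  | tmul p x => simp [dg_tmul, dxi_tmul]
  | add a b ha hb => simp [ha, hb]

lemma dxi_dxi_anticomm : dxi i (dxi j a) = -dxi j (dxi i a) := by
  induction a using TensorProduct.induction_on with
  | zero => simp
  | tmul p x => rw [dxi_tmul, dxi_tmul, dxi_tmul, dxi_tmul, CliffordAlgebra.contractLeft_comm,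
      tmul_neg]
  | add a b ha hb => simp [ha, hb, add_comm]

lemma dxi_gmul_comm : dxi i (gmul k a) = gmul k (dxi i a) := by
  induction a using TensorProduct.induction_on with
  | zero => simp
  | tmul p x => simp [dxi_tmul, gmul_tmul]
  | add a b ha hb => simp [ha, hb]

lemma dg_ximul_comm : dg i (ximul k a) = ximul k (dg i a) := by
  induction a using TensorProduct.induction_on with
  | zero => simp
  | tmul p x => simp [dg_tmul, ximul_tmul]
  | add a b ha hb => simp [ha, hb]

lemma gmul_gmul_comm : gmul k (gmul l a) = gmul l (gmul k a) := by
  simp only [gmul, LinearMap.mulLeft_apply, ← mul_assoc, Algebra.TensorProduct.tmul_mul_tmul,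
    one_mul, mul_comm (X k)]

lemma gmul_ximul_comm : gmul k (ximul l a) = ximul l (gmul k a) := by
  simp only [gmul, ximul, LinearMap.mulLeft_apply, ← mul_assoc,
    Algebra.TensorProduct.tmul_mul_tmul, one_mul, mul_one]

lemma ximul_ximul_anticomm : ximul k (ximul l a) = -ximul l (ximul k a) := by
  have h := eq_neg_of_add_eq_zero_left
    (ExteriorAlgebra.ι_add_mul_swap (R := ℝ) (Finsupp.single k (1 : ℝ)) (Finsupp.single l 1))
  simp only [ximul, LinearMap.mulLeft_apply, ← mul_assoc, Algebra.TensorProduct.tmul_mul_tmul,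
    one_mul, h, tmul_neg]
  exact neg_mul _ a

lemma dg_gmul : dg i (gmul k a) = (if i = k then a else 0) + gmul k (dg i a) := by
  induction a using TensorProduct.induction_on with
  | zero => simp
  | tmul p x =>
    rcases eq_or_ne i k with rfl | h
    · simp [dg_tmul, gmul_tmul, add_tmul, add_comm]
    · simp [dg_tmul, gmul_tmul, pderiv_X_of_ne h.symm, h]
  | add a b ha hb => simp only [map_add, ha, hb]; split_ifs <;> abel

lemma dxi_ximul : dxi i (ximul k a) = (if i = k then a else 0) - ximul k (dxi i a) := by
  induction a using TensorProduct.induction_on with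
  | zero => simp
  | tmul p x =>
    simp only [dxi_tmul, ximul_tmul, CliffordAlgebra.contractLeft_ι_mul, Finsupp.lapply_apply,
      Finsupp.single_apply, tmul_sub, tmul_smul]
    rcases eq_or_ne i k with rfl | h
    · simp
    · simp [h, h.symm]
  | add a b ha hb => simp only [map_add, ha, hb]; split_ifs <;> abel

end Relations

local notation "⁅" x ", " y "⁆₊" => anticommutator ℝ (Module.End ℝ SEA) x y

section Anticommutators

variable (i j k l : ℕ)

lemma anticomm_dxi_dxi : ⁅dxi i, dxi j⁆₊ = 0 := by
  refine LinearMap.ext fun a => ?_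
  simp [anticommutator_apply, dxi_dxi_anticomm i j]

lemma anticomm_dxi_gmul_mul_dxi : ⁅dxi i, gmul k * dxi j⁆₊ = 0 := by
  refine LinearMap.ext fun a => ?_
  simp [anticommutator_apply, dxi_gmul_comm, dxi_dxi_anticomm i j]

lemma anticomm_dxi_ximul_mul_dg : ⁅dxi i, ximul k * dg j⁆₊ = if i = k then dg j else 0 := by
  refine LinearMap.ext fun a => ?_
  simp only [anticommutator_apply, LinearMap.add_apply, Module.End.mul_apply, dxi_ximul,
    dg_dxi_comm, sub_add_cancel]
  split_ifs <;> rfl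

lemma anticomm_dxi_dxi_mul_dg : ⁅dxi i, dxi j * dg l⁆₊ = 0 := by
  refine LinearMap.ext fun a => ?_
  simp [anticommutator_apply, dg_dxi_comm, dxi_dxi_anticomm i j]

lemma anticomm_gmul_mul_dxi_gmul_mul_dxi : ⁅gmul k * dxi i, gmul l * dxi j⁆₊ = 0 := by
  refine LinearMap.ext fun a => ?_
  simp [anticommutator_apply, dxi_gmul_comm, dxi_dxi_anticomm i j, gmul_gmul_comm k l]

lemma anticomm_gmul_mul_dxi_ximul_mul_dg :
    ⁅gmul k * dxi i, ximul l * dg j⁆₊ =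
      (if i = l then gmul k * dg j else 0) + (if j = k then ximul l * dxi i else 0) := by
  refine LinearMap.ext fun a => ?_
  simp only [anticommutator_apply, LinearMap.add_apply, Module.End.mul_apply, dxi_ximul, dg_gmul,
    map_sub, map_add, gmul_ximul_comm, dg_dxi_comm]
  split_ifs <;> simp

lemma anticomm_gmul_mul_dxi_dxi_mul_dg :
    ⁅gmul k * dxi i, dxi j * dg l⁆₊ = if l = k then dxi j * dxi i else 0 := by
  refine LinearMap.ext fun a => ?_
  simp only [anticommutator_apply, LinearMap.add_apply, Module.End.mul_apply, dg_gmul,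
    map_add, dxi_gmul_comm, dg_dxi_comm, dxi_dxi_anticomm i j]
  split_ifs <;> simp

lemma anticomm_ximul_mul_dg_ximul_mul_dg : ⁅ximul k * dg i, ximul l * dg j⁆₊ = 0 := by
  refine LinearMap.ext fun a => ?_
  simp [anticommutator_apply, dg_ximul_comm, dg_dg_comm i j, ximul_ximul_anticomm k l]

lemma anticomm_ximul_mul_dg_dxi_mul_dg :
    ⁅ximul k * dg i, dxi j * dg l⁆₊ = if j = k then dg l * dg i else 0 := by
  refine LinearMap.ext fun a => ?_
  simp only [anticommutator_apply, LinearMap.add_apply, Module.End.mul_apply, dxi_ximul,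
    dg_ximul_comm, dg_dxi_comm, dg_dg_comm i l]
  split_ifs <;> simp

end Anticommutators

noncomputable def GopTrunc (T₂ v : ℝ) (m N : ℕ) : Module.End ℝ SEA :=
  T₂ • dxi (m + 1) + ∑ k ∈ range N, (k : ℝ) • (gmul k * dxi (m + k - 1))
  + ∑ k ∈ range N, ximul k * dg (k + m) + v • ∑ j ∈ range m, dxi j * dg (m - 1 - j)

lemma anticomm_GopTrunc (T₂ v : ℝ) {m N : ℕ} (hN : m + 2 ≤ N) :
    ⁅GopTrunc T₂ v 0 N, GopTrunc T₂ v m N⁆₊ =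
      (2 * T₂) • dg (m + 1)
      + ∑ k ∈ range N with m + k - 1 < N, (k : ℝ) • (gmul k * dg (m + k - 1))
      + ∑ k ∈ range N, (k : ℝ) • (ximul k * dxi (m + k - 1))
      + ∑ k ∈ range N, (k : ℝ) • (gmul k * dg (k - 1 + m))
      + ∑ k ∈ range N with k + m < N, ((k + m : ℕ) : ℝ) • (ximul k * dxi (k + m - 1))
      + v • ∑ j ∈ range m, ((m - 1 - j : ℕ) : ℝ) • (dxi j * dxi (m - 1 - j - 1))
      + v • ∑ j ∈ range m, dg (m - 1 - j) * dg j := by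
  have hlt : ∀ k ∈ range N, k < N := fun _ ↦ mem_range.mp
  have hpred : ∀ k ∈ range N, k - 1 < N := fun k hk ↦ by simp at hk; omega
  have hrefl : ∀ j ∈ range m, m - 1 - j < N := fun _ _ ↦ by omega
  have hm : ∀ j ∈ range m, j < N := fun j hj ↦ by simp at hj; omega
  simp only [GopTrunc, map_add, LinearMap.add_apply, map_sum, LinearMap.sum_apply, map_smul,
    LinearMap.smul_apply, anticommutator_comm (ximul _ * dg _) (dxi _),
    anticommutator_comm (ximul _ * dg _) (gmul _ * dxi _),
    anticommutator_comm (gmul _ * dxi _) (dxi _), anticomm_dxi_dxi, anticomm_dxi_gmul_mul_dxi,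
    anticomm_dxi_ximul_mul_dg, anticomm_dxi_dxi_mul_dg, anticomm_gmul_mul_dxi_gmul_mul_dxi,
    anticomm_gmul_mul_dxi_ximul_mul_dg, anticomm_gmul_mul_dxi_dxi_mul_dg,
    anticomm_ximul_mul_dg_ximul_mul_dg, anticomm_ximul_mul_dg_dxi_mul_dg, smul_zero, add_zero,
    zero_add, range_zero, sum_empty, sum_const_zero, sum_add_distrib, smul_add, Finset.smul_sum,
    smul_ite, sum_ite_eq, sum_ite_eq', mem_range, sum_ite_of_true hlt, sum_filter]
  rw [sum_comm (s := range N) (t := range N)]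
  simp only [sum_ite_eq, mem_range, sum_ite_of_true hpred, sum_ite_of_true hrefl,
    sum_ite_of_true hm, if_pos (show m + 1 < N by omega), if_pos (show 1 < N by omega)]
  rw [add_comm 1 m]
  module

noncomputable def LopTrunc (T₂ v : ℝ) (m N : ℕ) : Module.End ℝ SEA :=
  T₂ • dg (m + 1) + ∑ k ∈ range N, (k : ℝ) • (gmul k * dg (m + k - 1))
  + (v / 2) • ∑ j ∈ range m, dg j * dg (m - 1 - j)
  + ∑ k ∈ range N, ((k : ℝ) + m / 2) • (ximul k * dxi (m + k - 1))
  + (v / 2) • ∑ j ∈ range (m - 1), (((m : ℝ) - 2) / 2 - j) • (dxi j * dxi (m - j - 2))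

def SupportedBelow (B : ℕ) (a : SEA) : Prop :=
  ∀ i, B ≤ i → dg i a = 0 ∧ dxi i a = 0

lemma eventually_supportedBelow (a : SEA) : ∀ᶠ B in atTop, SupportedBelow B a :=
  eventually_forall_ge_atTop.2 (eventually_dg_eq_zero_and_dxi_eq_zero a)

lemma finsum_eq_sum_range {M : Type*} [AddCommMonoid M] {f : ℕ → M} {N : ℕ}
    (h : ∀ k, N ≤ k → f k = 0) : ∑ᶠ k, f k = ∑ k ∈ range N, f k :=
  finsum_eq_sum_of_support_subset f fun k hk ↦ by
    by_contra hkN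
    exact hk (h k (by simpa using hkN))

section Truncation

variable (T₂ v : ℝ) (m : ℕ) {B N : ℕ} {a : SEA}

lemma Gop_eq_GopTrunc_apply (ha : SupportedBelow B a) (hBN : B < N) :
    Gop T₂ v m a = GopTrunc T₂ v m N a := by
  rw [Gop, finsum_eq_sum_range (N := N) fun k hk ↦ by simp [(ha (m + k - 1) (by omega)).2],
    finsum_eq_sum_range (N := N) fun k hk ↦ by simp [(ha (k + m) (by omega)).1]]
  simp [GopTrunc, LinearMap.sum_apply]

lemma Lop_eq_LopTrunc_apply (ha : SupportedBelow B a) (hBN : B < N) :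
    Lop T₂ v m a = LopTrunc T₂ v m N a := by
  have hite : ∀ k : ℕ, (if m + k = 0 then 0 else ((k : ℝ) + m / 2) • ximul k (dxi (m + k - 1) a))
      = ((k : ℝ) + m / 2) • ximul k (dxi (m + k - 1) a) := fun k ↦ by
    split_ifs with h
    · obtain ⟨rfl, rfl⟩ : m = 0 ∧ k = 0 := by omega
      simp
    · rfl
  simp only [Lop, hite]
  rw [finsum_eq_sum_range (N := N) fun k hk ↦ by simp [(ha (m + k - 1) (by omega)).1],
    finsum_eq_sum_range (N := N) fun k hk ↦ by simp [(ha (m + k - 1) (by omega)).2]]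
  simp [LopTrunc, LinearMap.sum_apply]

end Truncation

lemma sum_range_dxi_dxi_eq_zero (n : ℕ) (a : SEA) :
    ∑ j ∈ range n, dxi j (dxi (n - 1 - j) a) = 0 := by
  have hS : ∑ j ∈ range n, dxi j (dxi (n - 1 - j) a)
      = -∑ j ∈ range n, dxi j (dxi (n - 1 - j) a) := by
    conv_lhs => rw [← sum_range_reflect]
    rw [← sum_neg_distrib]
    refine sum_congr rfl fun j hj ↦ ?_
    rw [mem_range] at hj
    rw [show n - 1 - (n - 1 - j) = j by omega, dxi_dxi_anticomm]
  refine (smul_eq_zero.mp ?_).resolve_left (two_ne_zero (α := ℝ))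
  rw [two_smul]
  nth_rewrite 2 [hS]
  exact add_neg_cancel _

lemma sum_range_natCast_smul_dxi_dxi (m : ℕ) (a : SEA) :
    ∑ j ∈ range m, ((m - 1 - j : ℕ) : ℝ) • dxi j (dxi (m - 1 - j - 1) a)
      = ∑ j ∈ range (m - 1), (((m : ℝ) - 2) / 2 - j) • dxi j (dxi (m - j - 2) a) := by
  obtain _ | n := m
  · simp
  have hsplit : ∀ j ∈ range n, ((n - j : ℕ) : ℝ) • dxi j (dxi (n - j - 1) a)
      = (((n + 1 : ℕ) - 2 : ℝ) / 2 - j) • dxi j (dxi (n + 1 - j - 2) a)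
        + ((n + 1 : ℝ) / 2) • dxi j (dxi (n - 1 - j) a) := fun j hj ↦ by
    rw [mem_range] at hj
    rw [show n + 1 - j - 2 = n - 1 - j by omega, show n - j - 1 = n - 1 - j by omega, ← add_smul,
      Nat.cast_sub hj.le]
    push_cast
    ring_nf
  simp only [add_tsub_cancel_right, sum_range_succ, tsub_self, Nat.cast_zero, zero_smul, add_zero]
  rw [sum_congr rfl hsplit, sum_add_distrib, ← smul_sum, sum_range_dxi_dxi_eq_zero, smul_zero,
    add_zero]

lemma anticomm_GopTrunc_apply (T₂ v : ℝ) {m B N : ℕ} {a : SEA} (ha : SupportedBelow B a)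
    (hBN : B < N) (hN : m + 2 ≤ N) :
    ⁅GopTrunc T₂ v 0 N, GopTrunc T₂ v m N⁆₊ a = (2 : ℝ) • LopTrunc T₂ v m N a := by
  have hg : ∑ k ∈ range N with m + k - 1 < N, (k : ℝ) • gmul k (dg (m + k - 1) a)
      = ∑ k ∈ range N, (k : ℝ) • gmul k (dg (m + k - 1) a) :=
    sum_filter_of_ne fun k _ hk ↦ by
      by_contra h
      simp [(ha (m + k - 1) (by omega)).1] at hk
  have hxi : ∑ k ∈ range N with k + m < N, ((k + m : ℕ) : ℝ) • ximul k (dxi (k + m - 1) a)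
      = ∑ k ∈ range N, ((m + k : ℕ) : ℝ) • ximul k (dxi (m + k - 1) a) := by
    rw [sum_filter_of_ne fun k _ hk ↦ ?_]
    · exact sum_congr rfl fun k _ ↦ by rw [add_comm k m]
    · by_contra h
      simp [(ha (k + m - 1) (by omega)).2] at hk
  have hg' : ∑ k ∈ range N, (k : ℝ) • gmul k (dg (k - 1 + m) a)
      = ∑ k ∈ range N, (k : ℝ) • gmul k (dg (m + k - 1) a) := by
    refine sum_congr rfl fun k _ ↦ ?_
    obtain rfl | hk := Nat.eq_zero_or_pos k
    · simp
    · rw [show k - 1 + m = m + k - 1 by omega]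
  have hxi' : ∑ k ∈ range N, ((m + k : ℕ) : ℝ) • ximul k (dxi (m + k - 1) a)
      = (2 : ℝ) • ∑ k ∈ range N, ((k : ℝ) + m / 2) • ximul k (dxi (m + k - 1) a)
        - ∑ k ∈ range N, (k : ℝ) • ximul k (dxi (m + k - 1) a) := by
    rw [eq_sub_iff_add_eq, ← sum_add_distrib, smul_sum]
    refine sum_congr rfl fun k _ ↦ ?_
    rw [← add_smul, smul_smul]
    push_cast
    ring_nf
  have hgg : ∑ j ∈ range m, dg (m - 1 - j) (dg j a) = ∑ j ∈ range m, dg j (dg (m - 1 - j) a) :=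
    sum_congr rfl fun j _ ↦ dg_dg_comm _ _ _
  rw [anticomm_GopTrunc T₂ v hN]
  simp only [LopTrunc, LinearMap.add_apply, LinearMap.sum_apply, LinearMap.smul_apply,
    Module.End.mul_apply]
  rw [hg, hxi, hxi', hg', hgg, sum_range_natCast_smul_dxi_dxi]
  module

lemma Gop_apply_zero (T₂ v : ℝ) (m : ℕ) : Gop T₂ v m 0 = 0 := by
  simp [Gop]

lemma Gop_zero_Gop_add_Gop_Gop_zero (T₂ v : ℝ) (m : ℕ) (a : SEA) :
    Gop T₂ v 0 (Gop T₂ v m a) + Gop T₂ v m (Gop T₂ v 0 a) = (2 : ℝ) • Lop T₂ v m a := by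
  obtain ⟨B, ha, hGm, hG0, hmB⟩ := ((eventually_supportedBelow a).and
    ((eventually_supportedBelow (Gop T₂ v m a)).and
    ((eventually_supportedBelow (Gop T₂ v 0 a)).and (eventually_ge_atTop (m + 1))))).exists
  have hBN := lt_add_one B
  rw [Gop_eq_GopTrunc_apply T₂ v 0 hGm hBN, Gop_eq_GopTrunc_apply T₂ v m hG0 hBN,
    Gop_eq_GopTrunc_apply T₂ v m ha hBN, Gop_eq_GopTrunc_apply T₂ v 0 ha hBN,
    Lop_eq_LopTrunc_apply T₂ v m ha hBN]
  exact anticomm_GopTrunc_apply T₂ v ha hBN (by omega)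

end SuperVirasoro

theorem fermionic_constraints_imply_bosonic (T₂ v : ℝ) (Z : SEA)
    (hG : ∀ m : ℕ, Gop T₂ v m Z = 0) : ∀ m : ℕ, Lop T₂ v m Z = 0 := by
  intro m
  have h := SuperVirasoro.Gop_zero_Gop_add_Gop_Gop_zero T₂ v m Z
  rw [hG, hG, SuperVirasoro.Gop_apply_zero, SuperVirasoro.Gop_apply_zero, add_zero, eq_comm,
    smul_eq_zero] at h
  exact h.resolve_left two_ne_zero
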